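/- arXiv:2010.03709 — 2 statements merged into one kernel-verified Lean document; each statement's English description precedes it below -/
import Mathlib

section
/- Let $(G_i)_{i\in\mathbb{N}}$ be a sequence of groups with norms $\|\cdot\|_{G_i}$ and $(s_i)$ a sequence of positive reals. Suppose for all $i$: (1) $\|g\|_{G_i} \geq 1$ for all nonidentity $g \in G_i$; (2) $\mathrm{diam}(G_{i+1}) \geq \mathrm{diam}(G_i)$ (diameter with respect to the norm); (3) $s_{i+1} \geq 2 s_i \,\mathrm{diam}(G_i)$. For $g$ in the direct sum $G = \bigoplus_i G_i$ define the norm $\|g\|_s = \sum_i s_i\|g_i\|_{G_i}$ and the quasi-ultranorm $\|g\|_s^{qu} = s_h \|g_h\|_{G_h}$ where $h = h(g)$ is the largest index in the support of $g$ (and $\|1\|_s^{qu}=0$). Then for all $g \in G$: $\|g\|_s^{qu} \leq \|g\|_s \leq 2\|g\|_s^{qu}$. -/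
/-!
Write `a i = s i * N i (g i)`. The growth condition makes each scale dominate everything below it:
`∑ i < m, a i ≤ s m` by induction, since as soon as some `a i` with `i ≤ m` is nonzero,
monotonicity gives `1 ≤ D m` and hence `∑ i ≤ m, a i ≤ s m + s m * D m ≤ 2 * s m * D m ≤ s (m + 1)`.
At the top index `h` the bound `1 ≤ N h (g h)` gives `s h ≤ a h`, so the whole sum is at most
`2 * a h`.
-/

open Finset

theorem sum_range_le_of_rapid_growth {a s D : ℕ → ℝ} (hs : ∀ i, 0 ≤ s i) (hD : Monotone D)
    (hgrow : ∀ i, 2 * s i * D i ≤ s (i + 1)) (haD : ∀ i, a i ≤ s i * D i)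
    (ha : ∀ i, a i ≠ 0 → 1 ≤ D i) (m : ℕ) : ∑ i ∈ range m, a i ≤ s m := by
  induction m with
  | zero => simpa using hs 0
  | succ m ih =>
    by_cases hzero : ∑ i ∈ range (m + 1), a i = 0
    · exact hzero ▸ hs (m + 1)
    obtain ⟨i, hi, hai⟩ := exists_ne_zero_of_sum_ne_zero hzero
    have hDm : 1 ≤ D m := (ha i hai).trans (hD (Nat.lt_succ_iff.mp (mem_range.mp hi)))
    calc ∑ i ∈ range (m + 1), a i = ∑ i ∈ range m, a i + a m := sum_range_succ a m
      _ ≤ s m + s m * D m := add_le_add ih (haD m)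
      _ ≤ 2 * s m * D m := by nlinarith [hs m]
      _ ≤ s (m + 1) := hgrow m

theorem finsum_le_two_mul_of_rapid_growth {a s D : ℕ → ℝ} (hs : ∀ i, 0 ≤ s i) (hD : Monotone D)
    (hgrow : ∀ i, 2 * s i * D i ≤ s (i + 1)) (haD : ∀ i, a i ≤ s i * D i)
    (ha : ∀ i, a i ≠ 0 → 1 ≤ D i) {h : ℕ} (hsupp : ∀ i, a i ≠ 0 → i ≤ h) (hh : s h ≤ a h) :
    ∑ᶠ i, a i ≤ 2 * a h := by
  have hsub : Function.support a ⊆ ↑(range (h + 1)) := fun i hi ↦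
    mem_range.mpr (Nat.lt_succ_iff.mpr (hsupp i hi))
  rw [finsum_eq_sum_of_support_subset a hsub, sum_range_succ]
  linarith [sum_range_le_of_rapid_growth hs hD hgrow haD ha h]

theorem stmt2_general (G : ℕ → Type*) [∀ i, Group (G i)]
    (N : ∀ i, G i → ℝ) (s D : ℕ → ℝ)
    (hN0 : ∀ i g, 0 ≤ N i g)
    (hNe : ∀ i (g : G i), N i g = 0 ↔ g = 1)
    (hN1 : ∀ i (g : G i), g ≠ 1 → 1 ≤ N i g)
    (hD : ∀ i (g : G i), N i g ≤ D i)
    (hDmono : ∀ i, D i ≤ D (i + 1))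
    (hs : ∀ i, 0 < s i)
    (hgrow : ∀ i, 2 * s i * D i ≤ s (i + 1)) :
    ∀ g : ∀ i, G i, {i | g i ≠ 1}.Finite →
      ((g = 1 → (∑ᶠ i, s i * N i (g i)) = 0) ∧
       ∀ h : ℕ, g h ≠ 1 → (∀ j, g j ≠ 1 → j ≤ h) →
         s h * N h (g h) ≤ (∑ᶠ i, s i * N i (g i)) ∧
         (∑ᶠ i, s i * N i (g i)) ≤ 2 * (s h * N h (g h))) := by
  intro g hfin
  have hne_one : ∀ i, s i * N i (g i) ≠ 0 → g i ≠ 1 := fun i hi hgi ↦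
    hi (by rw [(hNe i (g i)).mpr hgi, mul_zero])
  refine ⟨fun hg ↦ by simp [hg, (hNe _ _).mpr], fun h hgh hmax ↦ ⟨?_, ?_⟩⟩
  · have hfin' : (Function.support fun i ↦ s i * N i (g i)).Finite :=
      hfin.subset fun i hi ↦ hne_one i hi
    exact single_le_finsum h hfin' fun i ↦ mul_nonneg (hs i).le (hN0 i (g i))
  · refine finsum_le_two_mul_of_rapid_growth (fun i ↦ (hs i).le) (monotone_nat_of_le_succ hDmono)
      hgrow (fun i ↦ mul_le_mul_of_nonneg_left (hD i (g i)) (hs i).le)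
      (fun i hi ↦ (hN1 i (g i) (hne_one i hi)).trans (hD i (g i)))
      (fun i hi ↦ hmax i (hne_one i hi)) ?_
    exact le_mul_of_one_le_right (hs h).le (hN1 h (g h) hgh)

/-- comparison of the scaled direct sum norm with the
quasi-ultranorm under rapid growth of the scaling constants. -/
theorem stmt2 (G : ℕ → Type*) [∀ i, Group (G i)]
    (N : ∀ i, G i → ℝ) (s D : ℕ → ℝ)
    (hN0 : ∀ i g, 0 ≤ N i g)
    (hNe : ∀ i (g : G i), N i g = 0 ↔ g = 1)
    (hNi : ∀ i (g : G i), N i g⁻¹ = N i g)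
    (hNt : ∀ i (g h : G i), N i (g * h) ≤ N i g + N i h)
    (hN1 : ∀ i (g : G i), g ≠ 1 → 1 ≤ N i g)
    (hD : ∀ i (g : G i), N i g ≤ D i)
    (hDmono : ∀ i, D i ≤ D (i + 1))
    (hs : ∀ i, 0 < s i)
    (hgrow : ∀ i, 2 * s i * D i ≤ s (i + 1)) :
    ∀ g : ∀ i, G i, {i | g i ≠ 1}.Finite →
      ((g = 1 → (∑ᶠ i, s i * N i (g i)) = 0) ∧
       ∀ h : ℕ, g h ≠ 1 → (∀ j, g j ≠ 1 → j ≤ h) →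
         s h * N h (g h) ≤ (∑ᶠ i, s i * N i (g i)) ∧
         (∑ᶠ i, s i * N i (g i)) ≤ 2 * (s h * N h (g h))) :=
  stmt2_general G N s D hN0 hNe hN1 hD hDmono hs hgrow
end

section
/- Let $S$ be a set and let $r$ be a reduced word over the alphabet $S \cup S^{-1}$ (i.e., $r$ contains no subword of the form $ss^{-1}$ or $s^{-1}s$). If $r$ is equal to a cyclic shift of its formal inverse $r^{-1}$, then $r$ is the empty word. -/
/-- Letters are pairs (generator, sign); the formal inverse of a word reverses
the word and flips all signs. -/
def formalInv {S : Type*} (w : List (S × Bool)) : List (S × Bool) :=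
  (w.map (fun p => (p.1, !p.2))).reverse

/-- A word is reduced if no two adjacent letters are formal inverses. -/
def IsReducedWord {S : Type*} (w : List (S × Bool)) : Prop :=
  List.Chain' (fun a b => ¬(a.1 = b.1 ∧ a.2 = !b.2)) w

/-! If `r = v ++ u` and `r⁻¹ = u ++ v`, then `r⁻¹ = u⁻¹ ++ v⁻¹` and comparing lengths gives
`u⁻¹ = u` and `v⁻¹ = v`. A nonempty self-inverse word is not reduced: if its length is even,
its two middle letters are mutually inverse; if it is odd, its middle letter would be its
own inverse, impossible since inversion flips the sign. -/

section

variable {S : Type*}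

@[simp]
lemma length_formalInv (w : List (S × Bool)) : (formalInv w).length = w.length := by
  simp [formalInv]

lemma formalInv_append (a b : List (S × Bool)) :
    formalInv (a ++ b) = formalInv b ++ formalInv a := by
  simp [formalInv]

lemma IsReducedWord.of_append {a b : List (S × Bool)} (h : IsReducedWord (a ++ b)) :
    IsReducedWord a ∧ IsReducedWord b := by
  rw [IsReducedWord, List.Chain', List.isChain_append] at h
  exact ⟨h.1, h.2.1⟩

lemma getElem_of_formalInv_eq_self {w : List (S × Bool)} (h : formalInv w = w)
    {i j : ℕ} (hi : i < w.length) (hj : j < w.length) (hij : i + j + 1 = w.length) :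
    w[i] = (w[j].1, !w[j].2) := by
  have hj' : w.length - 1 - i = j := by omega
  rw [List.getElem_of_eq h.symm hi]
  simp only [formalInv, List.getElem_reverse, List.getElem_map, List.length_map, hj']

lemma eq_nil_of_formalInv_eq_self {w : List (S × Bool)} (hred : IsReducedWord w)
    (h : formalInv w = w) : w = [] := by
  rw [IsReducedWord, List.Chain', List.isChain_iff_getElem] at hred
  rcases Nat.even_or_odd' w.length with ⟨k, hk | hk⟩
  · rcases k with _ | k
    · exact List.length_eq_zero_iff.mp hk
    have hmid := getElem_of_formalInv_eq_self h (i := k) (j := k + 1) (by omega) (by omega)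
      (by omega)
    exact (hred k (by omega) ⟨by rw [hmid], by rw [hmid]⟩).elim
  · have hmid := getElem_of_formalInv_eq_self h (i := k) (j := k) (by omega) (by omega)
      (by omega)
    simpa using congrArg Prod.snd hmid

end

/-- a reduced word which equals a cyclic shift of its formal
inverse is empty. -/
theorem stmt5 {S : Type*} (r : List (S × Bool))
    (hred : IsReducedWord r)
    (hcyc : ∃ u v : List (S × Bool), formalInv r = u ++ v ∧ v ++ u = r) :
    r = [] := by
  obtain ⟨u, v, hinv, rfl⟩ := hcyc
  rw [formalInv_append] at hinv
  obtain ⟨hu, hv⟩ := List.append_inj hinv (length_formalInv u)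
  obtain ⟨hred_v, hred_u⟩ := hred.of_append
  rw [eq_nil_of_formalInv_eq_self hred_u hu, eq_nil_of_formalInv_eq_self hred_v hv]
  rfl
end
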